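/- arXiv:0807.1267 — 4 statements merged into one kernel-verified Lean document; each statement's English description precedes it below -/
import Mathlib

section
/- Let n be a positive integer, let σ be a Hermitian positive definite n×n complex matrix, and let φ ∈ ℂⁿ be a unit vector with associated rank-one matrix ρ = |φ⟩⟨φ|. Then the set of real numbers k such that σ − k·ρ is positive semidefinite has a greatest element, namely k₀ = (⟨φ, σ⁻¹ φ⟩)⁻¹. That is: σ − k₀·ρ is positive semidefinite, and for every real k, if σ − k·ρ is positive semidefinite then k ≤ k₀. -/
open Matrix
open scoped ComplexOrder

/-!
Cauchy–Schwarz for the form `⟨x, y⟩_σ = x* σ y`, applied to `σ⁻¹ φ` and `x`, gives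
`|⟨φ, x⟩|² ≤ ⟨φ, σ⁻¹ φ⟩ ⟨x, σ x⟩`. Hence `σ - k ρ ⪰ 0` as soon as `k ⟨φ, σ⁻¹ φ⟩ ≤ 1`, and testing
`σ - k ρ` on `x = σ⁻¹ φ`, where Cauchy–Schwarz is an equality, shows the converse.
-/

namespace Matrix

variable {m 𝕜 : Type*} [Fintype m] [RCLike 𝕜]

lemma IsHermitian.posSemidef_iff_re_dotProduct_mulVec_nonneg {A : Matrix m m 𝕜}
    (hA : A.IsHermitian) : A.PosSemidef ↔ ∀ x, 0 ≤ RCLike.re (star x ⬝ᵥ A *ᵥ x) := by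
  rw [posSemidef_iff_dotProduct_mulVec]
  simp [hA, RCLike.nonneg_iff (K := 𝕜), hA.im_star_dotProduct_mulVec_self]

lemma PosSemidef.norm_dotProduct_mulVec_self {A : Matrix m m 𝕜} (hA : A.PosSemidef)
    (x : m → 𝕜) : ‖star x ⬝ᵥ A *ᵥ x‖ = RCLike.re (star x ⬝ᵥ A *ᵥ x) := by
  simpa using congrArg RCLike.re (RCLike.norm_of_nonneg' (hA.dotProduct_mulVec_nonneg x))

lemma dotProduct_vecMulVec_star_mulVec (φ x : m → 𝕜) :
    star x ⬝ᵥ vecMulVec φ (star φ) *ᵥ x = (‖star φ ⬝ᵥ x‖ ^ 2 : ℝ) := by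
  rw [vecMulVec_mulVec, dotProduct_smul, star_dotProduct x φ, MulOpposite.smul_eq_mul_unop,
    MulOpposite.unop_op, RCLike.star_def, RCLike.conj_mul, RCLike.ofReal_pow]

lemma re_dotProduct_sub_smul_vecMulVec_mulVec (A : Matrix m m 𝕜) (k : ℝ) (φ x : m → 𝕜) :
    RCLike.re (star x ⬝ᵥ (A - (k : 𝕜) • vecMulVec φ (star φ)) *ᵥ x) =
      RCLike.re (star x ⬝ᵥ A *ᵥ x) - k * ‖star φ ⬝ᵥ x‖ ^ 2 := by
  rw [sub_mulVec, dotProduct_sub, smul_mulVec, dotProduct_smul, dotProduct_vecMulVec_star_mulVec]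
  simp

lemma IsHermitian.sub_smul_vecMulVec_star {A : Matrix m m 𝕜} (hA : A.IsHermitian) (k : ℝ)
    (φ : m → 𝕜) : (A - (k : 𝕜) • vecMulVec φ (star φ)).IsHermitian :=
  hA.sub ((posSemidef_vecMulVec_self_star φ).isHermitian.smul (by simp [IsSelfAdjoint]))

lemma PosSemidef.norm_dotProduct_mulVec_sq_le {A : Matrix m m 𝕜} (hA : A.PosSemidef)
    (x y : m → 𝕜) :
    ‖star x ⬝ᵥ A *ᵥ y‖ ^ 2 ≤ RCLike.re (star x ⬝ᵥ A *ᵥ x) * RCLike.re (star y ⬝ᵥ A *ᵥ y) := by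
  let _ := A.toSeminormedAddCommGroup hA
  let _ := A.toInnerProductSpace hA
  have h := inner_mul_inner_self_le (𝕜 := 𝕜) x y
  change ‖(A *ᵥ y) ⬝ᵥ star x‖ * ‖(A *ᵥ x) ⬝ᵥ star y‖
      ≤ RCLike.re ((A *ᵥ x) ⬝ᵥ star x) * RCLike.re ((A *ᵥ y) ⬝ᵥ star y) at h
  have hswap : star y ⬝ᵥ A *ᵥ x = star (star x ⬝ᵥ A *ᵥ y) := by
    rw [star_dotProduct, star_mulVec, ← dotProduct_mulVec, hA.isHermitian.eq]
  rw [dotProduct_comm (A *ᵥ y), dotProduct_comm (A *ᵥ x), dotProduct_comm (A *ᵥ x),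
    dotProduct_comm (A *ᵥ y), hswap, norm_star, ← sq] at h
  exact h

variable [DecidableEq m]

lemma IsHermitian.star_inv_mulVec_dotProduct_mulVec {A : Matrix m m 𝕜} (hA : A.IsHermitian)
    (hdet : IsUnit A.det) (φ x : m → 𝕜) : star (A⁻¹ *ᵥ φ) ⬝ᵥ A *ᵥ x = star φ ⬝ᵥ x := by
  rw [star_mulVec, hA.inv.eq, dotProduct_mulVec, vecMul_vecMul, nonsing_inv_mul A hdet, vecMul_one]

lemma PosDef.norm_dotProduct_sq_le {A : Matrix m m 𝕜} (hA : A.PosDef) (φ x : m → 𝕜) :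
    ‖star φ ⬝ᵥ x‖ ^ 2 ≤ RCLike.re (star φ ⬝ᵥ A⁻¹ *ᵥ φ) * RCLike.re (star x ⬝ᵥ A *ᵥ x) := by
  have key := hA.isHermitian.star_inv_mulVec_dotProduct_mulVec hA.det_pos.ne'.isUnit φ
  have h := hA.posSemidef.norm_dotProduct_mulVec_sq_le (A⁻¹ *ᵥ φ) x
  rwa [key, key] at h

lemma PosDef.posSemidef_sub_smul_vecMulVec_star_iff {A : Matrix m m 𝕜} (hA : A.PosDef) (k : ℝ)
    (φ : m → 𝕜) : (A - (k : 𝕜) • vecMulVec φ (star φ)).PosSemidef ↔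
      k * RCLike.re (star φ ⬝ᵥ A⁻¹ *ᵥ φ) ≤ 1 := by
  set c := RCLike.re (star φ ⬝ᵥ A⁻¹ *ᵥ φ)
  have hc : 0 ≤ c := hA.inv.posSemidef.re_dotProduct_nonneg φ
  rw [(hA.isHermitian.sub_smul_vecMulVec_star k φ).posSemidef_iff_re_dotProduct_mulVec_nonneg]
  simp only [re_dotProduct_sub_smul_vecMulVec_mulVec]
  constructor
  · intro h
    have hquad := h (A⁻¹ *ᵥ φ)
    rw [hA.isHermitian.star_inv_mulVec_dotProduct_mulVec hA.det_pos.ne'.isUnit,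
      hA.inv.posSemidef.norm_dotProduct_mulVec_self] at hquad
    rcases hc.eq_or_lt with hc0 | hcpos
    · simp [← hc0]
    · nlinarith
  · intro hk x
    have hx := hA.posSemidef.re_dotProduct_nonneg x
    have hcs := hA.norm_dotProduct_sq_le φ x
    rcases le_or_gt k 0 with hk0 | hkpos
    · nlinarith [sq_nonneg ‖star φ ⬝ᵥ x‖]
    · nlinarith [mul_le_mul_of_nonneg_left hcs hkpos.le]

end Matrix

theorem stmt_0_general {n : ℕ} (σ : Matrix (Fin n) (Fin n) ℂ)
    (hσ : σ.PosDef) (φ : Fin n → ℂ) (hφ : ∑ i, ‖φ i‖ ^ 2 = 1) :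
    IsGreatest {k : ℝ | (σ - (k : ℂ) • Matrix.vecMulVec φ (star φ)).PosSemidef}
      (((star φ ⬝ᵥ σ⁻¹ *ᵥ φ).re)⁻¹) := by
  have hφ0 : φ ≠ 0 := by
    rintro rfl
    simp at hφ
  have hc : 0 < (star φ ⬝ᵥ σ⁻¹ *ᵥ φ).re := hσ.inv.re_dotProduct_pos hφ0
  have hset : {k : ℝ | (σ - (k : ℂ) • vecMulVec φ (star φ)).PosSemidef} =
      {k | k * (star φ ⬝ᵥ σ⁻¹ *ᵥ φ).re ≤ 1} :=
    Set.ext fun k => hσ.posSemidef_sub_smul_vecMulVec_star_iff k φ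
  rw [hset]
  refine ⟨(inv_mul_cancel₀ hc.ne').le, fun k hk => ?_⟩
  rw [← one_mul (_ : ℝ)⁻¹, le_mul_inv_iff₀ hc]
  exact hk

/-- For a Hermitian positive definite `σ` and a unit vector `φ` with
`ρ = |φ⟩⟨φ|`, the set of reals `k` with `σ - k • ρ` positive semidefinite has greatest
element `k₀ = (⟨φ, σ⁻¹ φ⟩)⁻¹`. -/
theorem stmt_0 {n : ℕ} (hn : 0 < n) (σ : Matrix (Fin n) (Fin n) ℂ)
    (hσ : σ.PosDef) (φ : Fin n → ℂ) (hφ : ∑ i, ‖φ i‖ ^ 2 = 1) :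
    IsGreatest {k : ℝ | (σ - (k : ℂ) • Matrix.vecMulVec φ (star φ)).PosSemidef}
      (((star φ ⬝ᵥ σ⁻¹ *ᵥ φ).re)⁻¹) :=
  stmt_0_general σ hσ φ hφ
end

section
/- Let X be a finite set and let P and Q be probability distributions on X with Q(x) > 0 for all x ∈ X. Then for every subset X' ⊆ X, ∑_{x∈X'} P(x)·log₂(P(x)/Q(x)) ≥ −(log₂ e)/e; in particular this sum is strictly greater than −1. (Terms with P(x) = 0 contribute 0 to the sum.) -/
/-!
Writing `p log (p / q) = q · φ (p / q)` with `φ t = t log t ≥ -1/e`, each term is at least `-q/e`,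
so the sum over `X'` is at least `-(∑_{X'} Q)/e ≥ -1/e`. Dividing by `log 2` gives the first bound,
and `1/e < 1/2 < log 2` gives the second.
-/

open Real Finset

theorem Real.neg_exp_neg_one_le_mul_log {t : ℝ} (ht : 0 ≤ t) : -exp (-1) ≤ t * log t := by
  rcases ht.eq_or_lt with rfl | ht
  · simp [(exp_pos _).le]
  · have := mul_exp_neg_le_exp_neg_one (-log t)
    rw [neg_neg, exp_log ht] at this
    linarith

theorem Real.neg_mul_exp_neg_one_le_mul_log_div {p q : ℝ} (hp : 0 ≤ p) (hq : 0 < q) :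
    -(q * exp (-1)) ≤ p * log (p / q) := by
  have hpq : p * log (p / q) = q * (p / q * log (p / q)) := by field_simp
  rw [hpq, ← mul_neg]
  exact mul_le_mul_of_nonneg_left (neg_exp_neg_one_le_mul_log (by positivity)) hq.le

theorem neg_exp_neg_one_le_sum_mul_log_div {X : Type*} (P Q : X → ℝ) (s : Finset X)
    (hP0 : ∀ x ∈ s, 0 ≤ P x) (hQ0 : ∀ x ∈ s, 0 < Q x) (hQ1 : ∑ x ∈ s, Q x ≤ 1) :
    -exp (-1) ≤ ∑ x ∈ s, P x * log (P x / Q x) :=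
  calc -exp (-1) ≤ -((∑ x ∈ s, Q x) * exp (-1)) := by
        gcongr
        exact mul_le_of_le_one_left (exp_pos _).le hQ1
    _ = ∑ x ∈ s, -(Q x * exp (-1)) := by rw [sum_mul, sum_neg_distrib]
    _ ≤ ∑ x ∈ s, P x * log (P x / Q x) :=
        sum_le_sum fun x hx ↦ neg_mul_exp_neg_one_le_mul_log_div (hP0 x hx) (hQ0 x hx)

theorem stmt_2_general {X : Type*} [Fintype X] (P Q : X → ℝ)
    (hP0 : ∀ x, 0 ≤ P x)
    (hQ0 : ∀ x, 0 < Q x) (hQ1 : ∑ x, Q x = 1)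
    (X' : Finset X) :
    -(Real.logb 2 (Real.exp 1)) / Real.exp 1 ≤ ∑ x ∈ X', P x * Real.logb 2 (P x / Q x) ∧
    -1 < ∑ x ∈ X', P x * Real.logb 2 (P x / Q x) := by
  have hlog2 : 0 < log 2 := log_pos one_lt_two
  have hQX' : ∑ x ∈ X', Q x ≤ 1 :=
    hQ1 ▸ sum_le_univ_sum_of_nonneg fun x ↦ (hQ0 x).le
  have hnat := neg_exp_neg_one_le_sum_mul_log_div P Q X' (fun x _ ↦ hP0 x) (fun x _ ↦ hQ0 x) hQX'
  have hbound : -logb 2 (exp 1) / exp 1 = -exp (-1) / log 2 := by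
    rw [logb, log_exp, exp_neg]
    ring
  have hsum : ∑ x ∈ X', P x * logb 2 (P x / Q x) = (∑ x ∈ X', P x * log (P x / Q x)) / log 2 := by
    simp only [logb, sum_div, mul_div_assoc]
  have hlt : exp (-1) < log 2 := by linarith [exp_neg_one_lt_half, log_two_gt_d9]
  rw [hsum, hbound]
  refine ⟨by gcongr, lt_of_lt_of_le ?_ (by gcongr)⟩
  rw [lt_div_iff₀ hlog2]
  linarith

/-- For probability distributions `P`, `Q` on a finite set with `Q`
everywhere positive, and any subset `X'`,
`∑_{x∈X'} P(x)·log₂(P(x)/Q(x)) ≥ −(log₂ e)/e > −1`. -/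
theorem stmt_2 {X : Type*} [Fintype X] (P Q : X → ℝ)
    (hP0 : ∀ x, 0 ≤ P x) (hP1 : ∑ x, P x = 1)
    (hQ0 : ∀ x, 0 < Q x) (hQ1 : ∑ x, Q x = 1)
    (X' : Finset X) :
    -(Real.logb 2 (Real.exp 1)) / Real.exp 1 ≤ ∑ x ∈ X', P x * Real.logb 2 (P x / Q x) ∧
    -1 < ∑ x ∈ X', P x * Real.logb 2 (P x / Q x) :=
  stmt_2_general P Q hP0 hQ0 hQ1 X'
end

section
/- Let ρ and σ be density matrices of size n×n over ℂ, and let A be an n×n complex matrix with A†A ⪯ I (i.e., I − A†A is positive semidefinite), modeling a boolean-valued measurement that succeeds with Kraus operator A. Let p = Tr(A ρ A†) and q = Tr(A σ A†) (both real and nonnegative), and assume p > 0 and q > 0. Let ρ' = A ρ A† / p and σ' = A σ A† / q be the post-measurement states upon success. Then ‖ρ' − σ'‖₁ ≤ ‖ρ − σ‖₁ / max{p, q}. -/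
/-!
For Hermitian `K` and `0 ⪯ Q ⪯ 1` one has `2 Re Tr(QK) ≤ ‖K‖₁ + Re Tr K`: split `K` into its
positive and negative parts `K₊ - K₋`, then `Tr(QK₊) ≤ Tr K₊` and `Tr(QK₋) ≥ 0`. Equality holds
for the spectral projection of `K` onto `[0, ∞)`.

Assume `q ≤ p` and take that projection `Q` for the traceless `M = AρA†/p - AσA†/q`. Since
`Tr(QAσA†) ≥ 0` and `1/p ≤ 1/q`, we get `‖M‖₁ = 2 Re Tr(QM) ≤ (2/p) Re Tr(A†QA (ρ - σ))`. As
`AᴴA ⪯ 1`, also `0 ⪯ A†QA ⪯ 1`, and the bound for the traceless `ρ - σ` gives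
`‖M‖₁ ≤ ‖ρ - σ‖₁ / p`.
-/

open Matrix
open scoped ComplexOrder

/-- The trace norm of a matrix: `‖A‖₁ = Tr √(AᴴA)`; for Hermitian `A` this equals
the sum of the absolute values of the eigenvalues of `A`. -/
noncomputable def traceNorm {n : Type*} [Fintype n] [DecidableEq n]
    (A : Matrix n n ℂ) : ℝ :=
  ((Matrix.posSemidef_conjTranspose_mul_self A).1.eigenvectorUnitary.1 *
    diagonal (((↑) : ℝ → ℂ) ∘ (√·) ∘ (Matrix.posSemidef_conjTranspose_mul_self A).1.eigenvalues) *
    (star (Matrix.posSemidef_conjTranspose_mul_self A).1.eigenvectorUnitary : Matrix n n ℂ)).trace.re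

open scoped MatrixOrder

namespace Matrix

section RCLike

variable {m 𝕜 : Type*} [Fintype m] [DecidableEq m] [RCLike 𝕜]

lemma IsHermitian.trace_cfc {K : Matrix m m 𝕜} (hK : K.IsHermitian) (f : ℝ → ℝ) :
    (cfc f K).trace = ∑ i, (f (hK.eigenvalues i) : 𝕜) := by
  rw [hK.cfc_eq, IsHermitian.cfc, Unitary.conjStarAlgAut_apply, trace_mul_cycle,
    Unitary.coe_star_mul_self, one_mul, trace_diagonal]
  rfl

lemma PosSemidef.trace_mul_nonneg {Q S : Matrix m m 𝕜} (hQ : Q.PosSemidef) (hS : S.PosSemidef) :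
    0 ≤ (Q * S).trace := by
  obtain ⟨B, rfl⟩ := CStarAlgebra.nonneg_iff_eq_star_mul_self.mp hQ.nonneg
  rw [star_eq_conjTranspose, mul_assoc, trace_mul_comm]
  exact (hS.mul_mul_conjTranspose_same B).trace_nonneg

lemma PosSemidef.one_sub_conjTranspose_mul_mul {A Q : Matrix m m 𝕜}
    (hA : (1 - Aᴴ * A).PosSemidef) (hQ1 : (1 - Q).PosSemidef) :
    (1 - Aᴴ * Q * A).PosSemidef := by
  have h : 1 - Aᴴ * Q * A = (1 - Aᴴ * A) + Aᴴ * (1 - Q) * A := by noncomm_ring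
  rw [h]
  exact hA.add (hQ1.conjTranspose_mul_mul_same A)

end RCLike

variable {m : Type*} [Fintype m] [DecidableEq m]

lemma re_trace_mul_nonneg {Q S : Matrix m m ℂ} (hQ : Q.PosSemidef) (hS : S.PosSemidef) :
    0 ≤ (Q * S).trace.re :=
  (Complex.nonneg_iff.mp (hQ.trace_mul_nonneg hS)).1

lemma traceNorm_eq_re_trace_cfc_sqrt (X : Matrix m m ℂ) :
    traceNorm X = (cfc Real.sqrt (Xᴴ * X)).trace.re := by
  rw [(posSemidef_conjTranspose_mul_self X).1.cfc_eq]
  rfl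

lemma traceNorm_neg (X : Matrix m m ℂ) : traceNorm (-X) = traceNorm X := by
  simp only [traceNorm_eq_re_trace_cfc_sqrt, conjTranspose_neg, neg_mul_neg]

lemma traceNorm_sub_comm (X Y : Matrix m m ℂ) : traceNorm (X - Y) = traceNorm (Y - X) := by
  rw [← neg_sub, traceNorm_neg]

lemma IsHermitian.traceNorm_eq_sum_abs_eigenvalues {X : Matrix m m ℂ} (hX : X.IsHermitian) :
    traceNorm X = ∑ i, |hX.eigenvalues i| := by
  have hsq : Xᴴ * X = cfc (· ^ 2 : ℝ → ℝ) X := by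
    rw [cfc_pow_id X 2 hX.isSelfAdjoint, sq, hX.eq]
  rw [traceNorm_eq_re_trace_cfc_sqrt, hsq, ← cfc_comp Real.sqrt _ X hX.isSelfAdjoint,
    cfc_congr (f := Real.sqrt ∘ (· ^ 2)) (g := abs) fun x _ => Real.sqrt_sq_eq_abs x,
    hX.trace_cfc]
  simp

lemma IsHermitian.traceNorm_add_re_trace {K : Matrix m m ℂ} (hK : K.IsHermitian) :
    traceNorm K + K.trace.re = 2 * (cfc (·⁺ : ℝ → ℝ) K).trace.re := by
  rw [hK.traceNorm_eq_sum_abs_eigenvalues, hK.trace_eq_sum_eigenvalues, hK.trace_cfc]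
  simp only [Complex.coe_algebraMap, Complex.re_sum, Complex.ofReal_re]
  rw [← Finset.sum_add_distrib, Finset.mul_sum]
  refine Finset.sum_congr rfl fun i _ => ?_
  linarith [posPart_add_negPart (hK.eigenvalues i), posPart_sub_negPart (hK.eigenvalues i)]

lemma IsHermitian.two_mul_re_trace_mul_le {K Q : Matrix m m ℂ} (hK : K.IsHermitian)
    (hQ : Q.PosSemidef) (hQ1 : (1 - Q).PosSemidef) :
    2 * (Q * K).trace.re ≤ traceNorm K + K.trace.re := by
  set P := cfc (·⁺ : ℝ → ℝ) K
  set N := cfc (·⁻ : ℝ → ℝ) K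
  have hP : P.PosSemidef := nonneg_iff_posSemidef.mp (cfc_nonneg fun x _ => posPart_nonneg x)
  have hN : N.PosSemidef := nonneg_iff_posSemidef.mp (cfc_nonneg fun x _ => negPart_nonneg x)
  have hPN : K = P - N := by
    rw [← cfc_sub (fun x : ℝ => x⁺) (fun x => x⁻) K]
    simp only [posPart_sub_negPart]
    exact (cfc_id' ℝ K).symm
  have hQP := re_trace_mul_nonneg hQ1 hP
  have hQN := re_trace_mul_nonneg hQ hN
  rw [sub_mul, one_mul, trace_sub, Complex.sub_re] at hQP
  have hQK : (Q * K).trace.re = (Q * P).trace.re - (Q * N).trace.re := by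
    conv_lhs => rw [hPN]
    rw [mul_sub, trace_sub, Complex.sub_re]
  rw [hK.traceNorm_add_re_trace]
  linarith

lemma IsHermitian.exists_two_mul_re_trace_mul_eq {K : Matrix m m ℂ} (hK : K.IsHermitian) :
    ∃ Q : Matrix m m ℂ, Q.PosSemidef ∧ (1 - Q).PosSemidef ∧
      2 * (Q * K).trace.re = traceNorm K + K.trace.re := by
  set f : ℝ → ℝ := fun x => if 0 ≤ x then 1 else 0
  -- `f` is discontinuous, but continuity is only needed on the finite spectrum.
  have hf : ContinuousOn f (spectrum ℝ K) := finite_real_spectrum.continuousOn f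
  refine ⟨cfc f K, ?_, ?_, ?_⟩
  · exact nonneg_iff_posSemidef.mp (cfc_nonneg fun x _ => by simp only [f]; split_ifs <;> norm_num)
  · exact le_iff.mp (cfc_le_one f K fun x _ => by simp only [f]; split_ifs <;> norm_num)
  · rw [hK.traceNorm_add_re_trace]
    have hQK : cfc f K * K = cfc (·⁺ : ℝ → ℝ) K := calc
      cfc f K * K = cfc f K * cfc (fun x => x) K := by rw [cfc_id' ℝ K]
      _ = cfc (fun x => f x * x) K := (cfc_mul f _ K).symm
      _ = cfc (·⁺ : ℝ → ℝ) K := cfc_congr fun x _ => by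
        simp only [f]
        split_ifs with hx
        · rw [one_mul, posPart_of_nonneg hx]
        · rw [zero_mul, posPart_of_nonpos (not_le.mp hx).le]
    rw [hQK]

lemma IsHermitian.two_mul_re_trace_mul_conj_le {K Q A : Matrix m m ℂ} (hK : K.IsHermitian)
    (hQ : Q.PosSemidef) (hQ1 : (1 - Q).PosSemidef) (hA : (1 - Aᴴ * A).PosSemidef) :
    2 * (Q * (A * K * Aᴴ)).trace.re ≤ traceNorm K + K.trace.re := by
  rw [← mul_assoc, ← mul_assoc, trace_mul_comm, ← mul_assoc, ← mul_assoc]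
  exact hK.two_mul_re_trace_mul_le (hQ.conjTranspose_mul_mul_same A)
    (hA.one_sub_conjTranspose_mul_mul hQ1)

lemma re_trace_mul_ofReal_smul (Q X : Matrix m m ℂ) (r : ℝ) :
    (Q * ((r : ℂ) • X)).trace.re = r * (Q * X).trace.re := by
  rw [mul_smul_comm, trace_smul, smul_eq_mul, Complex.re_ofReal_mul]

lemma traceNorm_inv_smul_conj_sub_le {ρ σ A : Matrix m m ℂ} (hρ : ρ.IsHermitian)
    (hσ : σ.PosSemidef) (htr : ρ.trace = σ.trace) (hA : (1 - Aᴴ * A).PosSemidef) {p q : ℝ}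
    (hp : (p : ℂ) = (A * ρ * Aᴴ).trace) (hq : (q : ℂ) = (A * σ * Aᴴ).trace)
    (hq0 : 0 < q) (hqp : q ≤ p) :
    traceNorm ((p : ℂ)⁻¹ • (A * ρ * Aᴴ) - (q : ℂ)⁻¹ • (A * σ * Aᴴ)) ≤ traceNorm (ρ - σ) / p := by
  have hp0 : 0 < p := hq0.trans_le hqp
  set M := (p : ℂ)⁻¹ • (A * ρ * Aᴴ) - (q : ℂ)⁻¹ • (A * σ * Aᴴ)
  have hM : M.IsHermitian := by
    refine ((isHermitian_mul_mul_conjTranspose A hρ).smul ?_).sub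
      ((isHermitian_mul_mul_conjTranspose A hσ.1).smul ?_) <;>
    simp [IsSelfAdjoint, ← Complex.ofReal_inv]
  have hMtr : M.trace = 0 := by
    rw [trace_sub, trace_smul, trace_smul, ← hp, ← hq, smul_eq_mul, smul_eq_mul,
      inv_mul_cancel₀ (by exact_mod_cast hp0.ne'), inv_mul_cancel₀ (by exact_mod_cast hq0.ne'),
      sub_self]
  obtain ⟨Q, hQ, hQ1, hQM⟩ := hM.exists_two_mul_re_trace_mul_eq
  have hρσ := (hρ.sub hσ.1).two_mul_re_trace_mul_conj_le hQ hQ1 hA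
  rw [trace_sub, htr, sub_self, Complex.zero_re, add_zero] at hρσ
  rw [hMtr, Complex.zero_re, add_zero] at hQM
  set t₁ := (Q * (A * ρ * Aᴴ)).trace.re
  set t₂ := (Q * (A * σ * Aᴴ)).trace.re
  have hQM' : (Q * M).trace.re = p⁻¹ * t₁ - q⁻¹ * t₂ := by
    rw [mul_sub, trace_sub, Complex.sub_re, ← Complex.ofReal_inv, ← Complex.ofReal_inv,
      re_trace_mul_ofReal_smul, re_trace_mul_ofReal_smul]
  have hρσ' : (Q * (A * (ρ - σ) * Aᴴ)).trace.re = t₁ - t₂ := by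
    rw [mul_sub, sub_mul, mul_sub, trace_sub, Complex.sub_re]
  have ht₂ : p⁻¹ * t₂ ≤ q⁻¹ * t₂ := mul_le_mul_of_nonneg_right (inv_anti₀ hq0 hqp)
    (re_trace_mul_nonneg hQ (hσ.mul_mul_conjTranspose_same A))
  have hscaled : p⁻¹ * (2 * (t₁ - t₂)) ≤ p⁻¹ * traceNorm (ρ - σ) :=
    mul_le_mul_of_nonneg_left (hρσ' ▸ hρσ) (inv_nonneg.mpr hp0.le)
  rw [div_eq_inv_mul]
  linarith

end Matrix

/-- If a boolean measurement with Kraus operator `A` (`AᴴA ⪯ I`) succeeds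
on density matrices `ρ`, `σ` with probabilities `p, q > 0`, then the post-measurement
states satisfy `‖ρ' − σ'‖₁ ≤ ‖ρ − σ‖₁ / max p q`. -/
theorem stmt_5 {n : ℕ} (ρ σ A : Matrix (Fin n) (Fin n) ℂ)
    (hρ : ρ.PosSemidef) (hρt : ρ.trace = 1)
    (hσ : σ.PosSemidef) (hσt : σ.trace = 1)
    (hA : (1 - Aᴴ * A).PosSemidef)
    (p q : ℝ)
    (hp : (p : ℂ) = (A * ρ * Aᴴ).trace) (hq : (q : ℂ) = (A * σ * Aᴴ).trace)
    (hp0 : 0 < p) (hq0 : 0 < q) :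
    traceNorm (((p : ℂ))⁻¹ • (A * ρ * Aᴴ) - ((q : ℂ))⁻¹ • (A * σ * Aᴴ))
      ≤ traceNorm (ρ - σ) / max p q := by
  rcases le_total q p with hqp | hpq
  · rw [max_eq_left hqp]
    exact traceNorm_inv_smul_conj_sub_le hρ.1 hσ (hρt.trans hσt.symm) hA hp hq hq0 hqp
  · rw [max_eq_right hpq, traceNorm_sub_comm, traceNorm_sub_comm ρ]
    exact traceNorm_inv_smul_conj_sub_le hσ.1 hρ (hσt.trans hρt.symm) hA hq hp hp0 hpq
end

section
/- Let ψ be an m×n complex matrix with Frobenius norm 1 (representing a bipartite pure quantum state via its coefficient matrix), let λ₁, …, λ_m be the eigenvalues of the positive semidefinite matrix ψψ† (the squared Schmidt coefficients, which are nonnegative and sum to 1), and let e = −∑ᵢ λᵢ·log₂ λᵢ be the amount of entanglement of ψ. Then there exists an m×n complex matrix ψ' with Frobenius norm 1 and rank(ψ') ≤ 2^{100·e} such that |⟨ψ, ψ'⟩_F|² ≥ 99/100, where ⟨·,·⟩_F is the Frobenius (Hilbert–Schmidt) inner product. (Consequently the pure states determined by ψ and ψ' are close in trace distance.) -/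
/-!
Let `λ` be the eigenvalues of `ψψᴴ` and `τ = 2^(-100e)`. Since `e` is the mean of the surprisal
`-log₂ λᵢ`, Markov's inequality shows that the eigenvalues below `τ` carry total mass at most
`1/100`, while at most `1/τ = 2^(100e)` eigenvalues are `≥ τ`. Projecting ψ onto the eigenvectors
of `ψψᴴ` with eigenvalue `≥ τ` and renormalising gives `ψ'` of rank at most `2^(100e)` with
`|⟨ψ, ψ'⟩|² = ∑_{λᵢ ≥ τ} λᵢ ≥ 99/100`.
-/

open Finset Matrix Real

noncomputable def shannonEntropy {ι : Type*} [Fintype ι] (b : ℝ) (p : ι → ℝ) : ℝ :=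
  -∑ i, p i * logb b (p i)

section Entropy

variable {ι : Type*} [Fintype ι] {b : ℝ} {p : ι → ℝ}

theorem neg_mul_logb_nonneg {x : ℝ} (hb : 1 < b) (h0 : 0 ≤ x) (h1 : x ≤ 1) :
    0 ≤ -(x * logb b x) :=
  neg_nonneg.2 <| mul_nonpos_of_nonneg_of_nonpos h0 (logb_nonpos hb h0 h1)

theorem shannonEntropy_nonneg (hb : 1 < b) (h0 : ∀ i, 0 ≤ p i) (h1 : ∀ i, p i ≤ 1) :
    0 ≤ shannonEntropy b p := by
  rw [shannonEntropy, ← sum_neg_distrib]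
  exact sum_nonneg fun i _ => neg_mul_logb_nonneg hb (h0 i) (h1 i)

theorem mul_le_neg_mul_logb_of_lt_rpow {x a : ℝ} (hb : 1 < b) (hx : 0 ≤ x) (h : x < b ^ (-a)) :
    a * x ≤ -(x * logb b x) := by
  rcases hx.eq_or_lt with rfl | hx
  · simp
  · have : logb b x < -a := (logb_lt_iff_lt_rpow hb hx).2 h
    nlinarith

theorem eq_zero_of_lt_one_of_shannonEntropy_eq_zero (hb : 1 < b) (h0 : ∀ i, 0 ≤ p i)
    (h1 : ∀ i, p i ≤ 1) (hH : shannonEntropy b p = 0) {i : ι} (hi : p i < 1) : p i = 0 := by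
  have hterm : -(p i * logb b (p i)) = 0 := by
    refine (sum_eq_zero_iff_of_nonneg fun j _ => neg_mul_logb_nonneg hb (h0 j) (h1 j)).1 ?_ i
      (mem_univ i)
    rw [sum_neg_distrib]
    exact hH
  by_contra hne
  have hpos := lt_of_le_of_ne (h0 i) (Ne.symm hne)
  linarith [mul_neg_of_pos_of_neg hpos (logb_neg hb hpos hi)]

/-- Markov's inequality for the surprisal `-logb b (p i)`. -/
theorem sum_filter_lt_rpow_le (hb : 1 < b) {c : ℝ} (hc : 0 < c) (h0 : ∀ i, 0 ≤ p i)
    (h1 : ∀ i, p i ≤ 1) :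
    ∑ i with p i < b ^ (-(c * shannonEntropy b p)), p i ≤ c⁻¹ := by
  rcases (shannonEntropy_nonneg hb h0 h1).eq_or_lt with hH | hH
  · refine (sum_eq_zero fun i hi => ?_).trans_le (inv_pos.2 hc).le
    rw [mem_filter, ← hH, mul_zero, neg_zero, rpow_zero] at hi
    exact eq_zero_of_lt_one_of_shannonEntropy_eq_zero hb h0 h1 hH.symm hi.2
  set H := shannonEntropy b p
  set T := ∑ i with p i < b ^ (-(c * H)), p i
  have hmarkov : c * H * T ≤ H := calc
    c * H * T = ∑ i with p i < b ^ (-(c * H)), c * H * p i := mul_sum _ _ _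
    _ ≤ ∑ i with p i < b ^ (-(c * H)), -(p i * logb b (p i)) :=
      sum_le_sum fun i hi => mul_le_neg_mul_logb_of_lt_rpow hb (h0 i) (mem_filter.1 hi).2
    _ ≤ ∑ i, -(p i * logb b (p i)) :=
      sum_le_sum_of_subset_of_nonneg (subset_univ _) fun i _ _ =>
        neg_mul_logb_nonneg hb (h0 i) (h1 i)
    _ = H := sum_neg_distrib _
  rw [← mul_one c⁻¹, le_inv_mul_iff₀ hc]
  exact le_of_mul_le_mul_left (by linarith) hH

theorem card_filter_rpow_neg_le (hb : 0 < b) (h0 : ∀ i, 0 ≤ p i) (hsum : ∑ i, p i = 1) (a : ℝ) :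
    (#{i | b ^ (-a) ≤ p i} : ℝ) ≤ b ^ a := by
  have hmass : (#{i | b ^ (-a) ≤ p i} : ℝ) * b ^ (-a) ≤ 1 := calc
    _ = #{i | b ^ (-a) ≤ p i} • b ^ (-a) := (nsmul_eq_mul _ _).symm
    _ ≤ ∑ i with b ^ (-a) ≤ p i, p i := card_nsmul_le_sum _ _ _ fun i hi => (mem_filter.1 hi).2
    _ ≤ 1 := hsum ▸ sum_le_sum_of_subset_of_nonneg (subset_univ _) fun i _ _ => h0 i
  calc (#{i | b ^ (-a) ≤ p i} : ℝ) = #{i | b ^ (-a) ≤ p i} * b ^ (-a) * b ^ a := by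
        rw [mul_assoc, ← rpow_add hb, neg_add_cancel, rpow_zero, mul_one]
    _ ≤ b ^ a := by nlinarith [rpow_pos_of_pos hb a]

end Entropy

namespace Matrix

variable {𝕜 m n : Type*} [RCLike 𝕜] [Fintype m]

theorem conjTranspose_mul_mul_self_eq_of_isIdempotentElem {P : Matrix m m 𝕜} (hPh : P.IsHermitian)
    (hPP : IsIdempotentElem P) (ψ : Matrix m n 𝕜) : (P * ψ)ᴴ * (P * ψ) = ψᴴ * (P * ψ) := by
  rw [conjTranspose_mul, hPh.eq, Matrix.mul_assoc, ← Matrix.mul_assoc P, hPP.eq]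

variable [Fintype n]

theorem trace_conjTranspose_mul_eq_sum (A B : Matrix m n 𝕜) :
    (Aᴴ * B).trace = ∑ i, ∑ j, starRingEnd 𝕜 (A i j) * B i j := by
  simp only [trace, diag, mul_apply, conjTranspose_apply, RCLike.star_def]
  exact sum_comm

theorem trace_conjTranspose_mul_self_eq_sum (A : Matrix m n 𝕜) :
    (Aᴴ * A).trace = ((∑ i, ∑ j, ‖A i j‖ ^ 2 : ℝ) : 𝕜) := by
  simp [trace_conjTranspose_mul_eq_sum, RCLike.conj_mul]

theorem trace_conjTranspose_mul_mul (P : Matrix m m 𝕜) (ψ : Matrix m n 𝕜) :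
    (ψᴴ * (P * ψ)).trace = (P * (ψ * ψᴴ)).trace := by
  rw [← Matrix.mul_assoc, trace_mul_cycle, trace_mul_comm]

theorem exists_normalize_of_trace_eq (ψ B : Matrix m n 𝕜) {t : ℝ} (ht : 0 < t)
    (hBB : (Bᴴ * B).trace = t) (hψB : (ψᴴ * B).trace = t) :
    ∃ ψ' : Matrix m n 𝕜, ∑ i, ∑ j, ‖ψ' i j‖ ^ 2 = 1 ∧ ψ'.rank ≤ B.rank ∧
      ‖∑ i, ∑ j, starRingEnd 𝕜 (ψ i j) * ψ' i j‖ ^ 2 = t := by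
  refine ⟨(((√t)⁻¹ : ℝ) : 𝕜) • B, ?_, ?_, ?_⟩
  · have h := trace_conjTranspose_mul_self_eq_sum ((((√t)⁻¹ : ℝ) : 𝕜) • B)
    rw [conjTranspose_smul, Matrix.smul_mul, Matrix.mul_smul, trace_smul, trace_smul, hBB,
      RCLike.star_def, RCLike.conj_ofReal, smul_eq_mul, smul_eq_mul] at h
    have h1 : (√t)⁻¹ * ((√t)⁻¹ * t) = 1 := by
      rw [← mul_assoc, ← mul_inv, mul_self_sqrt ht.le, inv_mul_cancel₀ ht.ne']
    rw [← RCLike.ofReal_mul, ← RCLike.ofReal_mul, h1] at h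
    exact_mod_cast h.symm
  · refine (rank_smul_of_mem_nonZeroDivisors B (mem_nonZeroDivisors_of_ne_zero ?_)).le
    simpa using (sqrt_pos.2 ht).ne'
  · rw [← trace_conjTranspose_mul_eq_sum, Matrix.mul_smul, trace_smul, hψB, smul_eq_mul]
    have h1 : (√t)⁻¹ * t = √t := by rw [inv_mul_eq_div, div_sqrt]
    rw [← RCLike.ofReal_mul, h1, RCLike.norm_ofReal, abs_of_nonneg (sqrt_nonneg t), sq_sqrt ht.le]

variable [DecidableEq m]

theorem sum_eigenvalues_mul_conjTranspose_self (ψ : Matrix m n 𝕜) :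
    ∑ i, (isHermitian_mul_conjTranspose_self ψ).eigenvalues i = ∑ i, ∑ j, ‖ψ i j‖ ^ 2 := by
  have h := (isHermitian_mul_conjTranspose_self ψ).trace_eq_sum_eigenvalues
  rw [trace_mul_comm, trace_conjTranspose_mul_self_eq_sum] at h
  exact_mod_cast h.symm

namespace IsHermitian

variable {A : Matrix m m 𝕜} (hA : A.IsHermitian)

theorem cfc_mul_cfc (f g : ℝ → ℝ) : hA.cfc f * hA.cfc g = hA.cfc (f * g) := by
  simp only [IsHermitian.cfc, ← map_mul, diagonal_mul_diagonal]
  congr! with i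
  simp

theorem conjTranspose_cfc (f : ℝ → ℝ) : (hA.cfc f)ᴴ = hA.cfc f := by
  rw [← star_eq_conjTranspose, IsHermitian.cfc, ← map_star, star_eq_conjTranspose,
    diagonal_conjTranspose]
  congr!
  ext i
  simp

theorem cfc_id : hA.cfc id = A := hA.spectral_theorem.symm

theorem trace_cfc_s8 (f : ℝ → ℝ) : (hA.cfc f).trace = ∑ i, (f (hA.eigenvalues i) : 𝕜) := by
  rw [IsHermitian.cfc, Unitary.conjStarAlgAut_apply, trace_mul_cycle, Unitary.coe_star_mul_self,
    Matrix.one_mul, trace_diagonal]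
  rfl

theorem rank_cfc_le (f : ℝ → ℝ) : (hA.cfc f).rank ≤ #{i | f (hA.eigenvalues i) ≠ 0} := by
  classical
  calc (hA.cfc f).rank ≤ (diagonal (RCLike.ofReal ∘ f ∘ hA.eigenvalues : m → 𝕜)).rank := by
        rw [IsHermitian.cfc, Unitary.conjStarAlgAut_apply]
        exact (rank_mul_le_left _ _).trans (rank_mul_le_right _ _)
    _ = #{i | f (hA.eigenvalues i) ≠ 0} := by
        rw [rank_diagonal, Fintype.card_subtype]
        simp

noncomputable def spectralProjection (τ : ℝ) : Matrix m m 𝕜 :=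
  hA.cfc fun x => if τ ≤ x then 1 else 0

variable (τ : ℝ)

theorem isIdempotentElem_spectralProjection : IsIdempotentElem (hA.spectralProjection τ) := by
  rw [IsIdempotentElem, spectralProjection, cfc_mul_cfc]
  congr 1
  ext x
  split_ifs <;> simp [*]

theorem isHermitian_spectralProjection : (hA.spectralProjection τ).IsHermitian :=
  hA.conjTranspose_cfc _

theorem trace_spectralProjection_mul :
    (hA.spectralProjection τ * A).trace =
      ((∑ i with τ ≤ hA.eigenvalues i, hA.eigenvalues i : ℝ) : 𝕜) := by
  nth_rw 2 [← hA.cfc_id]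
  rw [spectralProjection, cfc_mul_cfc, trace_cfc_s8, sum_filter]
  push_cast
  simp

theorem rank_spectralProjection_le :
    (hA.spectralProjection τ).rank ≤ #{i | τ ≤ hA.eigenvalues i} :=
  (hA.rank_cfc_le _).trans_eq (by simp)

end IsHermitian

end Matrix

/-- Any bipartite pure state `ψ` (coefficient matrix of Frobenius norm 1)
with entanglement `e` is `1/20`-close (fidelity `≥ 99/100`) to a pure state of Schmidt
rank at most `2^{100·e}`. -/
theorem stmt_8 {m n : ℕ} (ψ : Matrix (Fin m) (Fin n) ℂ)
    (hψ : ∑ i, ∑ j, ‖ψ i j‖ ^ 2 = 1)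
    (e : ℝ)
    (he : e = -∑ i, (Matrix.isHermitian_mul_conjTranspose_self ψ).eigenvalues i *
        Real.logb 2 ((Matrix.isHermitian_mul_conjTranspose_self ψ).eigenvalues i)) :
    ∃ ψ' : Matrix (Fin m) (Fin n) ℂ,
      (∑ i, ∑ j, ‖ψ' i j‖ ^ 2 = 1) ∧
      (ψ'.rank : ℝ) ≤ (2 : ℝ) ^ (100 * e) ∧
      (99 / 100 : ℝ) ≤ ‖∑ i, ∑ j, (starRingEnd ℂ) (ψ i j) * ψ' i j‖ ^ 2 := by
  set hA := isHermitian_mul_conjTranspose_self ψ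
  set p := hA.eigenvalues
  have h0 : ∀ i, 0 ≤ p i := eigenvalues_self_mul_conjTranspose_nonneg ψ
  have hsum : ∑ i, p i = 1 := (sum_eigenvalues_mul_conjTranspose_self ψ).trans hψ
  have h1 : ∀ i, p i ≤ 1 := fun i => hsum ▸ single_le_sum (fun j _ => h0 j) (mem_univ i)
  set τ : ℝ := 2 ^ (-(100 * e))
  set t := ∑ i with τ ≤ p i, p i
  have ht : 99 / 100 ≤ t := by
    have htail := sum_filter_lt_rpow_le one_lt_two (c := 100) (by norm_num) h0 h1
    rw [← show e = shannonEntropy 2 p from he] at htail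
    have hsplit := sum_filter_add_sum_filter_not univ (τ ≤ p ·) p
    simp only [not_le] at hsplit
    linarith
  set P := hA.spectralProjection τ
  have hψB : (ψᴴ * (P * ψ)).trace = t := by
    rw [trace_conjTranspose_mul_mul, hA.trace_spectralProjection_mul]
    rfl
  have hBB : ((P * ψ)ᴴ * (P * ψ)).trace = t := by
    rw [conjTranspose_mul_mul_self_eq_of_isIdempotentElem (hA.isHermitian_spectralProjection τ)
      (hA.isIdempotentElem_spectralProjection τ), hψB]
  obtain ⟨ψ', hnorm, hrank, hfid⟩ := exists_normalize_of_trace_eq ψ (P * ψ)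
    ((by norm_num : (0 : ℝ) < 99 / 100).trans_le ht) hBB hψB
  refine ⟨ψ', hnorm, ?_, hfid ▸ ht⟩
  calc (ψ'.rank : ℝ) ≤ #{i | τ ≤ p i} := by
        exact_mod_cast hrank.trans <| (rank_mul_le_left _ _).trans (hA.rank_spectralProjection_le τ)
    _ ≤ 2 ^ (100 * e) := card_filter_rpow_neg_le two_pos h0 hsum _
end
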